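/- For all n ≥ 1, the number of increasing ordered trees with n edges whose leaves taken in preorder are increasing equals the number of Stirling permutations of size n whose plateaus, read from left to right, are increasing. -/

import Mathlib

inductive OTree : Type where
  | node : ℕ → List OTree → OTree

/-- The label of the root of the tree. -/
def OTree.label : OTree → ℕ
  | .node l _ => l

/-- The (ordered) list of subtrees at the root. -/
def OTree.children : OTree → List OTree
  | .node _ ts => ts

/-- Labels of all vertices in preorder. -/
def OTree.preorder : OTree → List ℕ
  | .node l ts => l :: (ts.attach.map (fun t => OTree.preorder t.1)).flatten
decreasing_by
  have := List.sizeOf_lt_of_mem t.2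
  simp only [OTree.node.sizeOf_spec]
  omega

/-- Labels of the leaves, in preorder (walkaround) order. -/
def OTree.leaves : OTree → List ℕ
  | .node l ts =>
      if ts.isEmpty then [l] else (ts.attach.map (fun t => OTree.leaves t.1)).flatten
decreasing_by
  have := List.sizeOf_lt_of_mem t.2
  simp only [OTree.node.sizeOf_spec]
  omega

/-- Each child's label exceeds its parent's label. -/
inductive OTree.Increasing : OTree → Prop where
  | node : ∀ (l : ℕ) (ts : List OTree),
      (∀ t ∈ ts, l < t.label) → (∀ t ∈ ts, t.Increasing) →
      OTree.Increasing (.node l ts)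

/-- An increasing ordered tree of size `n` (i.e. with `n` edges): an ordered
tree with `n+1` vertices labeled `0,1,...,n` (each label used exactly once, as
recorded by the preorder list of labels), rooted at the vertex labeled `0`,
such that each child's label exceeds its parent's label. -/
def IsIncOrdTree (n : ℕ) (t : OTree) : Prop :=
  t.label = 0 ∧ t.preorder.Perm (List.range (n + 1)) ∧ t.Increasing

/-- The labels of the leaves, taken in preorder, are increasing. -/
def HasIncLeaves (t : OTree) : Prop :=
  t.leaves.Pairwise (· < ·)

/-- `l` is a permutation (as a sequence) of the multiset `{1,1,2,2,...,n,n}`. -/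
def IsDoubleMultiset (n : ℕ) (l : List ℕ) : Prop :=
  ∀ i : ℕ, l.count i = if 1 ≤ i ∧ i ≤ n then 2 else 0

/-- A Stirling permutation of size `n`: a permutation of `{1,1,2,2,...,n,n}`
such that every entry lying strictly between the two (equal) occurrences of a
value exceeds that value. -/
def IsStirlingPerm (n : ℕ) (l : List ℕ) : Prop :=
  IsDoubleMultiset n l ∧
    ∀ a b c : Fin l.length, a < b → b < c → l.get a = l.get c →
      l.get a < l.get b

/-- A Gessel permutation of size `n`: a permutation of `{1,1,2,2,...,n,n}` in
which the second occurrence of each value is a right-to-left minimum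
(equivalently, the second occurrences of `1,2,...,n` appear in that order). -/
def IsGesselPerm (n : ℕ) (l : List ℕ) : Prop :=
  IsDoubleMultiset n l ∧
    ∀ a c d : Fin l.length, a < c → l.get a = l.get c → c < d →
      l.get c < l.get d

/-- The plateaus of `l` (pairs of adjacent equal entries), read from left to
right, have increasing values. Entries are accessed with `List.getD` (all
indices involved are in range). -/
def HasIncPlateaus (l : List ℕ) : Prop :=
  ∀ i j : ℕ, i < j → j + 1 < l.length →
    l.getD i 0 = l.getD (i + 1) 0 → l.getD j 0 = l.getD (j + 1) 0 →
    l.getD i 0 < l.getD j 0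

/-! Walking around an increasing plane tree depth first and writing down every non-root label
both when the walk arrives at the vertex and when it leaves it produces a Stirling permutation;
conversely the first letter of a Stirling permutation and its second occurrence enclose the word
of the subtree below that vertex, so the word determines the tree. Under this bijection the
leaves are exactly the vertices whose two occurrences are adjacent, i.e. the plateaus, and they
are met in the same order, so increasing leaves correspond to increasing plateaus. -/

section StirlingWord

variable {α : Type*} [Preorder α]

def IsStirlingWord (w : List α) : Prop := ∀ a b, [a, b, a].Sublist w → a < b

theorem IsStirlingWord.sublist {v w : List α} (hw : IsStirlingWord w) (h : v.Sublist w) :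
    IsStirlingWord v := fun a b hab => hw a b (hab.trans h)

theorem IsStirlingWord.append {u v : List α} (hu : IsStirlingWord u) (hv : IsStirlingWord v)
    (huv : ∀ x ∈ u, x ∉ v) : IsStirlingWord (u ++ v) := by
  intro x y h
  obtain ⟨l₁, l₂, hl, h₁, h₂⟩ := List.sublist_append_iff.1 h
  rcases l₁ with _ | ⟨_, _ | ⟨_, _ | ⟨_, _ | _⟩⟩⟩ <;> simp at hl
  · exact hv x y (hl ▸ h₂)
  · obtain ⟨rfl, rfl⟩ := hl
    exact absurd (h₂.subset (by simp)) (huv x (h₁.subset (by simp)))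
  · obtain ⟨rfl, rfl, rfl⟩ := hl
    exact absurd (h₂.subset (by simp)) (huv x (h₁.subset (by simp)))
  · obtain ⟨rfl, rfl, rfl, -⟩ := hl
    exact hu _ _ h₁

theorem isStirlingWord_cons_append_singleton {a : α} {v : List α} (hv : IsStirlingWord v)
    (ha : ∀ b ∈ v, a < b) : IsStirlingWord (a :: v ++ [a]) := by
  intro x y h
  rcases List.sublist_cons_iff.1 h with h | ⟨r, hr, h⟩
  · obtain ⟨l₁, l₂, hl, h₁, h₂⟩ := List.sublist_append_iff.1 h
    rcases List.sublist_singleton.1 h₂ with rfl | rfl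
    · exact hv x y (by simpa [hl] using h₁)
    · rcases l₁ with _ | ⟨_, _ | ⟨_, _ | _⟩⟩ <;> simp at hl
      obtain ⟨rfl, rfl, rfl⟩ := hl
      exact absurd (ha x (h₁.subset (by simp))) (lt_irrefl x)
  · simp only [List.cons.injEq] at hr
    obtain ⟨rfl, rfl⟩ := hr
    rcases List.mem_append.1 (h.subset (List.mem_cons_self ..)) with hy | hy
    · exact ha y hy
    · classical
      obtain rfl : y = x := List.mem_singleton.1 hy
      have hav : y ∉ v := fun hy => lt_irrefl y (ha y hy)
      have := (List.replicate_sublist_iff (n := 2)).1 h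
      simp [List.count_append, List.count_eq_zero.2 hav] at this

theorem IsStirlingWord.of_cons_append_cons {a : α} {v z : List α}
    (h : IsStirlingWord (a :: v ++ a :: z)) :
    (∀ b ∈ v, a < b) ∧ (∀ x ∈ v, x ∉ z) ∧ IsStirlingWord v ∧ IsStirlingWord z := by
  have hv : ∀ b ∈ v, a < b := fun b hb =>
    h a b ((List.cons_sublist_cons.2 (List.singleton_sublist.2 hb)).append
      (List.cons_sublist_cons.2 (List.nil_sublist z)))
  refine ⟨hv, fun x hxv hxz => ?_, h.sublist ?_, h.sublist ?_⟩
  · have := h x a ((List.singleton_sublist.2 (List.mem_cons_of_mem a hxv)).append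
      (List.cons_sublist_cons.2 (List.singleton_sublist.2 hxz)))
    exact lt_asymm (hv x hxv) this
  · exact (List.sublist_cons_self a v).trans (List.sublist_append_left _ _)
  · exact (List.sublist_cons_self a z).trans (List.sublist_append_right _ _)

theorem isStirlingWord_iff_get {l : List α} : IsStirlingWord l ↔
    ∀ a b c : Fin l.length, a < b → b < c → l.get a = l.get c → l.get a < l.get b := by
  constructor
  · intro h a b c hab hbc hac
    have := List.map_getElem_sublist (is := [a, b, c]) (by simp [hab, hbc, hab.trans hbc])
    simp only [List.get_eq_getElem] at hac ⊢
    exact h _ _ (by simpa [hac] using this)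
  · intro h x y hs
    obtain ⟨is, his, hpw⟩ := List.sublist_eq_map_getElem hs
    rcases is with _ | ⟨i, _ | ⟨j, _ | ⟨k, _ | _⟩⟩⟩ <;> simp at his
    obtain ⟨rfl, rfl, hk⟩ := his
    simp at hpw
    exact h i j k hpw.1.1 hpw.2 hk

end StirlingWord

theorem isDoubleMultiset_iff {n : ℕ} {l : List ℕ} :
    IsDoubleMultiset n l ↔ ∀ x, l.count x = 2 * (List.range' 1 n).count x := by
  refine forall_congr' fun x => ?_
  rw [List.count_range_1']
  split_ifs <;> omega

theorem isStirlingPerm_iff {n : ℕ} {l : List ℕ} :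
    IsStirlingPerm n l ↔ IsDoubleMultiset n l ∧ IsStirlingWord l := by
  rw [IsStirlingPerm, isStirlingWord_iff_get]

section Plateaus

variable {α : Type*} [DecidableEq α]

def plateaus : List α → List α
  | a :: b :: w => if a = b then a :: plateaus (b :: w) else plateaus (b :: w)
  | _ => []

theorem plateaus_cons_cons (a b : α) (w : List α) :
    plateaus (a :: b :: w) = if a = b then a :: plateaus (b :: w) else plateaus (b :: w) := rfl

theorem plateaus_append_cons : ∀ (u : List α) (a : α) (v : List α),
    plateaus (u ++ a :: v) = plateaus (u ++ [a]) ++ plateaus (a :: v)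
  | [], _, _ => rfl
  | [b], a, v => by by_cases h : b = a <;> simp [plateaus_cons_cons, h, plateaus]
  | b :: c :: u, a, v => by
    have := plateaus_append_cons (c :: u) a v
    by_cases h : b = c <;> simp_all [plateaus_cons_cons]

theorem plateaus_cons_of_head?_ne {a : α} {w : List α} (h : w.head? ≠ some a) :
    plateaus (a :: w) = plateaus w := by
  rcases w with _ | ⟨b, w⟩
  · rfl
  · simp_all [plateaus_cons_cons, eq_comm]

theorem plateaus_concat_of_getLast?_ne {a : α} {w : List α} (h : w.getLast? ≠ some a) :
    plateaus (w ++ [a]) = plateaus w := by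
  rcases w.eq_nil_or_concat with rfl | ⟨w, b, rfl⟩
  · rfl
  · rw [List.concat_eq_append, List.append_assoc, List.singleton_append, plateaus_append_cons]
    simp_all [plateaus]

theorem plateaus_cons_append_singleton {a : α} {w : List α} (hw : w ≠ []) (ha : a ∉ w) :
    plateaus (a :: w ++ [a]) = plateaus w := by
  obtain ⟨b, w, rfl⟩ := List.exists_cons_of_ne_nil hw
  rw [plateaus_concat_of_getLast?_ne, plateaus_cons_of_head?_ne]
  · simpa [eq_comm] using List.ne_of_not_mem_cons ha
  · intro h
    rw [List.getLast?_cons_cons] at h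
    exact ha (List.mem_of_getLast? h)

end Plateaus

theorem mem_plateaus_iff {x : ℕ} : ∀ {w : List ℕ},
    x ∈ plateaus w ↔ ∃ j, j + 1 < w.length ∧ w.getD j 0 = x ∧ w.getD (j + 1) 0 = x
  | [] => by simp [plateaus]
  | [a] => by simp [plateaus]
  | a :: b :: w => by
    rw [← Nat.or_exists_add_one, plateaus_cons_cons, apply_ite (x ∈ ·), List.mem_cons,
      mem_plateaus_iff]
    by_cases h : a = b
    · simp [h, eq_comm]
    · have : ¬(a = x ∧ b = x) := fun ⟨ha, hb⟩ => h (ha.trans hb.symm)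
      simp [h, this]

theorem hasIncPlateaus_cons_cons_iff {a b : ℕ} {w : List ℕ} :
    HasIncPlateaus (a :: b :: w) ↔
      (a = b → ∀ x ∈ plateaus (b :: w), a < x) ∧ HasIncPlateaus (b :: w) := by
  unfold HasIncPlateaus
  rw [← Nat.and_forall_add_one]
  apply and_congr
  · simp only [mem_plateaus_iff]
    constructor
    · rintro h rfl x ⟨j, hj, rfl, hx⟩
      simpa using h (j + 1) j.succ_pos (by simpa using hj) rfl (by simpa using hx.symm)
    · intro h j hj0 hj hab hjj
      obtain ⟨j, rfl⟩ := Nat.exists_eq_add_one_of_ne_zero hj0.ne'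
      simp only [List.getD_cons_succ, List.getD_cons_zero, List.length_cons] at hab hjj hj ⊢
      exact h hab _ ⟨j, by simp at hj ⊢; omega, rfl, hjj.symm⟩
  · constructor
    · intro h i j hij hj
      simpa using h i (j + 1) (by omega) (by simpa using hj)
    · intro h i j hij hj
      obtain ⟨j, rfl⟩ := Nat.exists_eq_add_one_of_ne_zero (by omega : j ≠ 0)
      simpa using h i j (by omega) (by simpa using hj)

theorem hasIncPlateaus_iff_pairwise : ∀ {w : List ℕ},
    HasIncPlateaus w ↔ (plateaus w).Pairwise (· < ·)
  | [] => by simp [HasIncPlateaus, plateaus]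
  | [a] => by simp [HasIncPlateaus, plateaus]
  | a :: b :: w => by
    rw [hasIncPlateaus_cons_cons_iff, hasIncPlateaus_iff_pairwise, plateaus_cons_cons]
    by_cases h : a = b <;> simp [h]

namespace OTree

theorem preorder_node (a : ℕ) (ts : List OTree) :
    (node a ts).preorder = a :: (ts.map preorder).flatten := by
  rw [preorder, List.attach_map_val]

theorem leaves_node (a : ℕ) (ts : List OTree) :
    (node a ts).leaves = if ts.isEmpty then [a] else (ts.map leaves).flatten := by
  rw [leaves, List.attach_map_val]

theorem increasing_node_iff {a : ℕ} {ts : List OTree} :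
    (node a ts).Increasing ↔ (∀ t ∈ ts, a < t.label) ∧ ∀ t ∈ ts, t.Increasing :=
  ⟨fun | .node _ _ hlt hts => ⟨hlt, hts⟩, fun ⟨hlt, hts⟩ => .node a ts hlt hts⟩

theorem forest_induction {motive : List OTree → Prop} (nil : motive [])
    (cons : ∀ a ts F, motive ts → motive F → motive (node a ts :: F)) : ∀ F, motive F
  | [] => nil
  | node a ts :: F => cons a ts F (forest_induction nil cons ts) (forest_induction nil cons F)

def forestPreorder (F : List OTree) : List ℕ := (F.map preorder).flatten

def forestLeaves (F : List OTree) : List ℕ := (F.map leaves).flatten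

/-- The Stirling permutation of a plane forest: walk around it depth first and write down each
label when the walk arrives at the vertex and again when it leaves it. -/
def forestWord : List OTree → List ℕ
  | [] => []
  | node a ts :: F => a :: forestWord ts ++ a :: forestWord F

theorem forestPreorder_cons (a : ℕ) (ts F : List OTree) :
    forestPreorder (node a ts :: F) = a :: forestPreorder ts ++ forestPreorder F := by
  simp [forestPreorder, preorder_node]

theorem forestLeaves_cons (a : ℕ) (ts F : List OTree) :
    forestLeaves (node a ts :: F) =
      (if ts = [] then [a] else forestLeaves ts) ++ forestLeaves F := by
  simp [forestLeaves, leaves_node]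

theorem forestWord_cons (a : ℕ) (ts F : List OTree) :
    forestWord (node a ts :: F) = a :: forestWord ts ++ a :: forestWord F := by
  rw [forestWord]

theorem forestWord_ne_nil {F : List OTree} (hF : F ≠ []) : forestWord F ≠ [] := by
  obtain ⟨⟨a, ts⟩, F, rfl⟩ := List.exists_cons_of_ne_nil hF
  simp [forestWord_cons]

theorem count_forestWord (x : ℕ) :
    ∀ F, (forestWord F).count x = 2 * (forestPreorder F).count x := by
  refine forest_induction (by simp [forestWord, forestPreorder]) fun a ts F hts hF => ?_
  simp only [forestWord_cons, forestPreorder_cons, List.count_append, List.count_cons, hts, hF]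
  ring

theorem mem_forestWord_iff {x : ℕ} {F : List OTree} :
    x ∈ forestWord F ↔ x ∈ forestPreorder F := by
  simp only [← List.count_pos_iff, count_forestWord]
  omega

theorem label_mem_forestPreorder {t : OTree} {F : List OTree} (ht : t ∈ F) :
    t.label ∈ forestPreorder F := by
  obtain ⟨a, ts⟩ := t
  exact List.mem_flatten_of_mem (List.mem_map_of_mem ht) (by simp [preorder_node, label])

theorem Increasing.label_le {t : OTree} (ht : t.Increasing) :
    ∀ x ∈ t.preorder, t.label ≤ x := by
  induction ht with
  | node a ts hlt _ ih =>
    intro x hx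
    rw [preorder_node, List.mem_cons, List.mem_flatten] at hx
    rcases hx with rfl | ⟨_, hl, hx⟩
    · exact le_rfl
    · obtain ⟨t, ht, rfl⟩ := List.mem_map.1 hl
      exact (hlt t ht).le.trans (ih t ht x hx)

theorem Increasing.lt_of_mem_forestPreorder {a x : ℕ} {ts : List OTree}
    (h : (OTree.node a ts).Increasing) (hx : x ∈ forestPreorder ts) : a < x := by
  obtain ⟨hlt, hts⟩ := increasing_node_iff.1 h
  obtain ⟨_, hl, hx⟩ := List.mem_flatten.1 hx
  obtain ⟨t, ht, rfl⟩ := List.mem_map.1 hl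
  exact (hlt t ht).trans_le ((hts t ht).label_le x hx)

theorem isStirlingWord_forestWord :
    ∀ F : List OTree, (∀ t ∈ F, t.Increasing) → (forestPreorder F).Nodup →
      IsStirlingWord (forestWord F) := by
  refine forest_induction (fun _ _ _ _ h => by simp [forestWord] at h) ?_
  intro a ts F ihts ihF hinc hnd
  rw [forestPreorder_cons, List.nodup_append] at hnd
  have hroot := hinc _ List.mem_cons_self
  have hts := (increasing_node_iff.1 hroot).2
  rw [forestWord_cons, ← List.singleton_append (l := forestWord F), ← List.append_assoc]
  refine .append (isStirlingWord_cons_append_singleton (ihts hts hnd.1.of_cons) ?_)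
    (ihF (fun t ht => hinc t (List.mem_cons_of_mem _ ht)) hnd.2.1) ?_
  · exact fun b hb => hroot.lt_of_mem_forestPreorder (mem_forestWord_iff.1 hb)
  · intro x hx hxF
    rw [mem_forestWord_iff] at hxF
    have hx : x ∈ a :: forestPreorder ts := by
      simp only [List.mem_append, List.mem_cons, mem_forestWord_iff] at hx ⊢
      tauto
    exact hnd.2.2 x hx x hxF rfl

theorem increasing_of_isStirlingWord_forestWord :
    ∀ F : List OTree, IsStirlingWord (forestWord F) → ∀ t ∈ F, t.Increasing := by
  refine forest_induction (by simp) ?_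
  intro a ts F ihts ihF h
  rw [forestWord_cons] at h
  obtain ⟨hlt, -, hts, hF⟩ := h.of_cons_append_cons
  rintro t (_ | ⟨_, ht⟩)
  · exact increasing_node_iff.2 ⟨fun t ht =>
      hlt _ (mem_forestWord_iff.2 (label_mem_forestPreorder ht)), ihts hts⟩
  · exact ihF hF t ht

theorem plateaus_forestWord :
    ∀ F : List OTree, (forestPreorder F).Nodup → plateaus (forestWord F) = forestLeaves F := by
  refine forest_induction (fun _ => by simp [forestWord, forestLeaves, plateaus]) ?_
  intro a ts F ihts ihF hnd
  rw [forestPreorder_cons, List.nodup_append, List.nodup_cons] at hnd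
  obtain ⟨⟨hats, hnd_ts⟩, hnd_F, hdisj⟩ := hnd
  have haF : a ∉ forestWord F := fun h =>
    hdisj a List.mem_cons_self a (mem_forestWord_iff.1 h) rfl
  rw [forestWord_cons, plateaus_append_cons, forestLeaves_cons,
    plateaus_cons_of_head?_ne fun h => haF (List.mem_of_mem_head? h), ihF hnd_F]
  congr 1
  split_ifs with h
  · simp [h, forestWord, plateaus]
  · rw [plateaus_cons_append_singleton (forestWord_ne_nil h)
      (mt mem_forestWord_iff.1 hats), ihts hnd_ts]

/-- Inverse of `forestWord`: the first letter `a` of the word and its second occurrence enclose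
the word of the subtrees of the vertex `a`. -/
def parseForest : List ℕ → List OTree
  | [] => []
  | a :: w => node a (parseForest (w.take (w.idxOf a))) :: parseForest (w.drop (w.idxOf a + 1))
termination_by w => w.length
decreasing_by
  · simp only [List.length_cons, List.length_take]; omega
  · simp only [List.length_cons, List.length_drop]; omega

theorem parseForest_cons_append_cons {a : ℕ} {v z : List ℕ} (ha : a ∉ v) :
    parseForest (a :: v ++ a :: z) = node a (parseForest v) :: parseForest z := by
  rw [List.cons_append, parseForest, List.idxOf_append_of_notMem ha, List.idxOf_cons_self,
    add_zero, List.take_left]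
  simp

theorem parseForest_forestWord :
    ∀ F : List OTree, (∀ t ∈ F, t.Increasing) → parseForest (forestWord F) = F := by
  refine forest_induction (fun _ => by simp [forestWord, parseForest]) ?_
  intro a ts F ihts ihF hinc
  have hroot := hinc _ List.mem_cons_self
  have ha : a ∉ forestWord ts := fun h =>
    (hroot.lt_of_mem_forestPreorder (mem_forestWord_iff.1 h)).false
  rw [forestWord_cons, parseForest_cons_append_cons ha, ihts (increasing_node_iff.1 hroot).2,
    ihF fun t ht => hinc t (List.mem_cons_of_mem _ ht)]

theorem forestWord_parseForest {w : List ℕ} (hw : IsStirlingWord w)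
    (hc : ∀ x ∈ w, w.count x = 2) : forestWord (parseForest w) = w := by
  induction hn : w.length using Nat.strong_induction_on generalizing w with | _ n ih =>
  rcases w with _ | ⟨a, w⟩
  · simp [parseForest, forestWord]
  have ha : a ∈ w := by
    have := hc a List.mem_cons_self
    rw [List.count_cons_self] at this
    exact List.count_pos_iff.1 (by omega)
  obtain ⟨v, z, rfl, hav⟩ := List.eq_append_cons_of_mem ha
  rw [← List.cons_append] at hw hc hn ⊢
  obtain ⟨hlt, hdisj, hv, hz⟩ := hw.of_cons_append_cons
  have hcount (x : ℕ) : (a :: v ++ a :: z).count x =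
      v.count x + z.count x + if a = x then 2 else 0 := by
    simp only [List.count_append, List.count_cons, beq_iff_eq]
    split_ifs <;> omega
  have hlen : v.length < n ∧ z.length < n := by simp [← hn]; omega
  rw [parseForest_cons_append_cons hav, forestWord_cons, ih _ hlen.1 hv ?_ rfl,
    ih _ hlen.2 hz ?_ rfl]
  · intro x hx
    have := hc x (by simp [hx])
    rw [hcount, List.count_eq_zero.2 fun h => hdisj x h hx] at this
    have := List.count_pos_iff.2 hx
    split_ifs at * <;> omega
  · intro x hx
    have := hc x (by simp [hx])
    rw [hcount, List.count_eq_zero.2 (hdisj x hx), if_neg (hlt x hx).ne] at this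
    omega

theorem isIncOrdTree_node_iff {n a : ℕ} {ts : List OTree} :
    IsIncOrdTree n (node a ts) ↔
      a = 0 ∧ (forestPreorder ts).Perm (List.range' 1 n) ∧ ∀ t ∈ ts, t.Increasing := by
  rw [IsIncOrdTree, label, preorder_node, increasing_node_iff, List.range_eq_range',
    List.range'_succ]
  constructor
  · rintro ⟨rfl, hperm, -, hinc⟩
    exact ⟨rfl, List.perm_cons 0 |>.1 hperm, hinc⟩
  · rintro ⟨rfl, hperm, hinc⟩
    refine ⟨rfl, hperm.cons 0, fun t ht => ?_, hinc⟩
    have := (List.mem_range'_1.1 (hperm.subset (label_mem_forestPreorder ht))).1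
    omega

theorem hasIncLeaves_node_iff {a : ℕ} {ts : List OTree} :
    HasIncLeaves (node a ts) ↔ (forestLeaves ts).Pairwise (· < ·) := by
  rw [HasIncLeaves, leaves_node]
  rcases ts with _ | ⟨t, ts⟩
  · simp [forestLeaves]
  · rfl

theorem forestWord_parseForest_of_isStirlingPerm {n : ℕ} {l : List ℕ} (h : IsStirlingPerm n l) :
    forestWord (parseForest l) = l := by
  obtain ⟨hdm, hst⟩ := isStirlingPerm_iff.1 h
  refine forestWord_parseForest hst fun x hx => ?_
  have := hdm x
  have := List.count_pos_iff.2 hx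
  split_ifs at * <;> omega

theorem isStirlingPerm_forestWord_children {n : ℕ} {t : OTree}
    (h : IsIncOrdTree n t ∧ HasIncLeaves t) :
    IsStirlingPerm n (forestWord t.children) ∧ HasIncPlateaus (forestWord t.children) := by
  obtain ⟨a, ts⟩ := t
  obtain ⟨-, hperm, hinc⟩ := isIncOrdTree_node_iff.1 h.1
  have hnd := hperm.nodup_iff.2 List.nodup_range'
  refine ⟨isStirlingPerm_iff.2 ⟨isDoubleMultiset_iff.2 fun x => ?_,
    isStirlingWord_forestWord ts hinc hnd⟩, ?_⟩
  · rw [children, count_forestWord, hperm.count_eq]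
  · rw [children, hasIncPlateaus_iff_pairwise, plateaus_forestWord ts hnd,
      ← hasIncLeaves_node_iff]
    exact h.2

theorem isIncOrdTree_node_parseForest {n : ℕ} {l : List ℕ}
    (h : IsStirlingPerm n l ∧ HasIncPlateaus l) :
    IsIncOrdTree n (node 0 (parseForest l)) ∧ HasIncLeaves (node 0 (parseForest l)) := by
  obtain ⟨hdm, hst⟩ := isStirlingPerm_iff.1 h.1
  have hword := forestWord_parseForest_of_isStirlingPerm h.1
  have hperm : (forestPreorder (parseForest l)).Perm (List.range' 1 n) := by
    refine List.perm_iff_count.2 fun x => ?_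
    have := count_forestWord x (parseForest l)
    rw [hword, isDoubleMultiset_iff.1 hdm] at this
    omega
  have hnd := hperm.nodup_iff.2 List.nodup_range'
  refine ⟨isIncOrdTree_node_iff.2 ⟨rfl, hperm, increasing_of_isStirlingWord_forestWord _ ?_⟩,
    hasIncLeaves_node_iff.2 ?_⟩
  · rwa [hword]
  · rw [← plateaus_forestWord _ hnd, hword, ← hasIncPlateaus_iff_pairwise]
    exact h.2

end OTree

theorem stmt13_general (n : ℕ) :
    Nat.card {t : OTree // IsIncOrdTree n t ∧ HasIncLeaves t}
      = Nat.card {l : List ℕ // IsStirlingPerm n l ∧ HasIncPlateaus l} := by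
  refine Nat.card_congr
    { toFun := fun t =>
        ⟨OTree.forestWord t.1.children, OTree.isStirlingPerm_forestWord_children t.2⟩
      invFun := fun l =>
        ⟨.node 0 (OTree.parseForest l.1), OTree.isIncOrdTree_node_parseForest l.2⟩
      left_inv := ?_
      right_inv := fun l => Subtype.ext (OTree.forestWord_parseForest_of_isStirlingPerm l.2.1) }
  rintro ⟨⟨a, ts⟩, h, -⟩
  obtain ⟨rfl, -, hinc⟩ := OTree.isIncOrdTree_node_iff.1 h
  exact Subtype.ext (congrArg (OTree.node 0) (OTree.parseForest_forestWord ts hinc))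

theorem stmt13 (n : ℕ) (hn : 1 ≤ n) :
    Nat.card {t : OTree // IsIncOrdTree n t ∧ HasIncLeaves t}
      = Nat.card {l : List ℕ // IsStirlingPerm n l ∧ HasIncPlateaus l} :=
  stmt13_general n
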